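/- Let ψ ∈ 𝒦* with apex τ. The extinction probability q has a jump in its derivative at t = τ: lim_{t↑τ} (q(t)-1)/(t-τ) = 0 and lim_{t↓τ} (q(t)-1)/(t-τ) = -2/τ. -/

import Mathlib

open Set Filter Topology

/-- The function defined by the power series with coefficients `b`. -/
noncomputable def psi (b : ℕ → ℝ) (t : ℝ) : ℝ := ∑' n, b n * t ^ n

/-- The mean function of the Khinchin family of `psi b`. -/
noncomputable def mean (b : ℕ → ℝ) (t : ℝ) : ℝ := t * deriv (psi b) t / psi b t

/-- Extinction probability of the Galton–Watson process with offspring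
distribution `Y_t`: the smallest nonnegative fixed point of the offspring
probability generating function `ψ_t(x) = ψ(tx)/ψ(t)`. -/
noncomputable def extq (b : ℕ → ℝ) (t : ℝ) : ℝ :=
  sInf {x : ℝ | 0 ≤ x ∧ psi b (t * x) = x * psi b t}

/-!
Write `ψ'`, `ψ''` for the termwise derivatives `psi (derivCoeff b)` and
`psi (derivCoeff (derivCoeff b))`, `G(y) = ψ(y) - yψ'(y)` for the intercept at `0` of the tangent
to `ψ` at `y`, and `φ_t(x) = ψ(tx) - xψ(t)`, whose least zero is `q(t) = extq b t ∈ [0, 1]`.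
The apex condition is `G(τ) = 0`; it forces a positive coefficient of degree `≥ 2`, so `ψ'' > 0`
and `G' = -yψ''` makes `G` positive before `τ` and negative after it. Since
`φ_t(1) = φ_t(q(t)) = 0`, `φ_t'(1) = -G(t)` and `φ_t'' = t²ψ''(t·)`, Taylor's formula at `1` gives
`q(t) - 1 = 2G(t) / (t²ψ''(tξ))` with `ξ ∈ (q(t), 1)` whenever `q(t) < 1`. Hence `q = 1` on
`(0, τ]`, while as `t ↓ τ` we get `q(t) → 1`, `tξ → τ` and `G(t) / (t - τ) → G'(τ) = -τψ''(τ)`,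
so the right slope is `-2/τ`.
-/

lemma exists_hasDerivAt_eq_mul_sub_div_two {f f' f'' : ℝ → ℝ} {a b : ℝ} (hab : a < b)
    (hf : ∀ x ∈ Icc a b, HasDerivAt f (f' x) x)
    (hf' : ∀ x ∈ Icc a b, HasDerivAt f' (f'' x) x)
    (ha : f a = 0) (hb : f b = 0) : ∃ ξ ∈ Ioo a b, f' b = f'' ξ * (b - a) / 2 := by
  -- Subtract the quadratic through `(a, 0)` tangent to `f` at `b`, then apply Rolle twice.
  set K := f' b / (b - a)
  have hba : b - a ≠ 0 := sub_ne_zero.2 hab.ne'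
  have hg : ∀ x ∈ Icc a b, HasDerivAt (fun x => f x - f' b * (x - b) - K * (x - b) ^ 2)
      (f' x - f' b - K * (2 * (x - b))) x := fun x hx => by
    have := ((hf x hx).fun_sub (((hasDerivAt_id' x).sub_const b).const_mul (f' b))).fun_sub
      ((((hasDerivAt_id' x).sub_const b).fun_pow 2).const_mul K)
    exact this.congr_deriv (by ring)
  obtain ⟨c, hc, hc0⟩ := exists_hasDerivAt_eq_zero hab
    (fun x hx => (hg x hx).continuousAt.continuousWithinAt)
    (by simp only [K, ha, hb]; field_simp; ring) (fun x hx => hg x (Ioo_subset_Icc_self hx))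
  have hg' : ∀ x ∈ Icc c b, HasDerivAt (fun x => f' x - f' b - K * (2 * (x - b)))
      (f'' x - 2 * K) x := fun x hx => by
    have := ((hf' x ⟨hc.1.le.trans hx.1, hx.2⟩).sub_const (f' b)).fun_sub
      ((((hasDerivAt_id' x).sub_const b).const_mul 2).const_mul K)
    exact this.congr_deriv (by ring)
  obtain ⟨ξ, hξ, hξ0⟩ := exists_hasDerivAt_eq_zero hc.2
    (fun x hx => (hg' x hx).continuousAt.continuousWithinAt)
    (by rw [hc0]; ring) (fun x hx => hg' x (Ioo_subset_Icc_self hx))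
  refine ⟨ξ, ⟨hc.1.trans hξ.1, hξ.2⟩, ?_⟩
  rw [sub_eq_zero.1 hξ0, mul_assoc, mul_div_cancel_left₀ _ two_ne_zero]
  exact (div_mul_cancel₀ _ hba).symm

lemma HasDerivAt.exists_mem_Ioo_neg {f : ℝ → ℝ} {f' a b : ℝ} (hf : HasDerivAt f f' b)
    (hf' : 0 < f') (hb : f b = 0) (hab : a < b) : ∃ x ∈ Ioo a b, f x < 0 := by
  have hslope : ∀ᶠ x in 𝓝[<] b, 0 < slope f b x :=
    ((hasDerivAt_iff_tendsto_slope.1 hf).mono_left (nhdsLT_le_nhdsNE b)).eventually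
      (eventually_gt_nhds hf')
  obtain ⟨x, hx, hxab⟩ := (hslope.and (Ioo_mem_nhdsLT hab)).exists
  exact ⟨x, hxab, neg_of_slope_pos hxab.2 hx hb⟩

lemma isLeast_csInf_of_isClosed_inter_Iic {S : Set ℝ} {c : ℝ} (hc : c ∈ S) (hS : BddBelow S)
    (hcl : IsClosed (S ∩ Iic c)) : IsLeast S (sInf S) := by
  have hmem := hcl.csInf_mem ⟨c, hc, le_refl c⟩ (hS.mono inter_subset_left)
  have hleast : IsLeast S (sInf (S ∩ Iic c)) := by
    refine ⟨hmem.1, fun x hx => ?_⟩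
    rcases le_total x c with hxc | hcx
    · exact csInf_le (hS.mono inter_subset_left) ⟨hx, hxc⟩
    · exact hmem.2.trans hcx
  rwa [hleast.csInf_eq]

def derivCoeff (a : ℕ → ℝ) (n : ℕ) : ℝ := (n + 1) * a (n + 1)

def SummableOnIco (a : ℕ → ℝ) (R : ℝ) : Prop :=
  ∀ t : ℝ, 0 ≤ t → t < R → Summable fun n => a n * t ^ n

section PowerSeries

variable {a : ℕ → ℝ} {R : ℝ}

lemma summable_derivCoeff_mul_pow {t s : ℝ} (ht : 0 ≤ t) (hts : t < s)
    (hs : Summable fun n => a n * s ^ n) : Summable fun n => derivCoeff a n * t ^ n := by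
  have hs0 : 0 < s := ht.trans_lt hts
  obtain ⟨C, hC⟩ := hs.tendsto_atTop_zero.norm.bddAbove_range
  have hgeom : Summable fun n : ℕ => ((n : ℝ) + 1) * (t / s) ^ n := by
    have hr : ‖t / s‖ < 1 := by
      rw [Real.norm_of_nonneg (div_nonneg ht hs0.le)]; exact (div_lt_one hs0).2 hts
    simpa [add_mul] using (summable_pow_mul_geometric_of_norm_lt_one 1 hr).add
      (summable_geometric_of_lt_one (div_nonneg ht hs0.le) ((div_lt_one hs0).2 hts))
  refine .of_norm_bounded (hgeom.mul_left (C / s)) fun n => ?_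
  have hn : ‖a (n + 1)‖ * s ^ (n + 1) ≤ C := by
    simpa [norm_mul, norm_pow, Real.norm_of_nonneg hs0.le] using hC ⟨n + 1, rfl⟩
  calc ‖derivCoeff a n * t ^ n‖
      = ((n : ℝ) + 1) * (t / s) ^ n / s * (‖a (n + 1)‖ * s ^ (n + 1)) := by
        rw [derivCoeff, norm_mul, norm_mul, norm_pow, Real.norm_of_nonneg ht,
          Real.norm_of_nonneg (by positivity : (0 : ℝ) ≤ n + 1), div_pow]
        field_simp
        ring
    _ ≤ ((n : ℝ) + 1) * (t / s) ^ n / s * C := by gcongr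
    _ = C / s * (((n : ℝ) + 1) * (t / s) ^ n) := by ring

lemma summable_derivCoeff (hconv : SummableOnIco a R) : SummableOnIco (derivCoeff a) R :=
  fun t ht htR => summable_derivCoeff_mul_pow ht (by linarith : t < (t + R) / 2)
    (hconv _ (by linarith) (by linarith))

lemma hasDerivAt_psi (hconv : SummableOnIco a R)
    {y : ℝ} (hy : |y| < R) : HasDerivAt (psi a) (psi (derivCoeff a) y) y := by
  obtain ⟨r, hyr, hrR⟩ := exists_between hy
  have hr0 : 0 < r := (abs_nonneg y).trans_lt hyr
  have hmem : y ∈ Ioo (-r) r := abs_lt.1 hyr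
  have hu : Summable fun n : ℕ => ‖a n‖ * (n * r ^ (n - 1)) := by
    refine (summable_nat_add_iff 1).1 ?_
    refine (summable_derivCoeff hconv r hr0.le hrR).norm.congr fun n => ?_
    simp only [derivCoeff, norm_mul, norm_pow, Real.norm_eq_abs, abs_of_nonneg hr0.le,
      abs_of_nonneg (by positivity : (0 : ℝ) ≤ n + 1), Nat.cast_add, Nat.cast_one,
      add_tsub_cancel_right]
    ring
  have hderiv := hasDerivAt_tsum_of_isPreconnected (g := fun n z => a n * z ^ n)
    (g' := fun n z => a n * (n * z ^ (n - 1))) hu isOpen_Ioo isPreconnected_Ioo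
    (fun n z _ => (hasDerivAt_pow n z).const_mul (a n))
    (fun n z hz => by
      rw [norm_mul, norm_mul, norm_pow, Real.norm_natCast]
      gcongr
      exact (abs_lt.2 hz).le)
    (by simp [hr0] : (0 : ℝ) ∈ Ioo (-r) r) (hconv 0 le_rfl (hr0.trans hrR)) hmem
  refine hderiv.congr_deriv ?_
  rw [(Summable.of_norm_bounded hu fun n => ?_).tsum_eq_zero_add]
  · simp only [psi, derivCoeff, CharP.cast_eq_zero, zero_mul, mul_zero, zero_add,
      Nat.cast_add, Nat.cast_one, add_tsub_cancel_right]
    congr with n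
    ring
  · rw [norm_mul, norm_mul, norm_pow, Real.norm_natCast]
    gcongr
    exact (abs_lt.2 hmem).le

lemma psi_zero (a : ℕ → ℝ) : psi a 0 = a 0 := by
  rw [psi, tsum_eq_single 0 fun n hn => by rw [zero_pow hn, mul_zero], pow_zero, mul_one]

lemma derivCoeff_nonneg (ha : ∀ n, 0 ≤ a n) (n : ℕ) : 0 ≤ derivCoeff a n :=
  mul_nonneg (by positivity) (ha _)

lemma coeff_mul_pow_le_psi (ha : ∀ n, 0 ≤ a n) {t : ℝ} (ht : 0 ≤ t)
    (hs : Summable fun n => a n * t ^ n) (n : ℕ) : a n * t ^ n ≤ psi a t :=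
  hs.le_tsum n fun j _ => mul_nonneg (ha j) (pow_nonneg ht j)

lemma psi_pos (ha : ∀ n, 0 ≤ a n) {t : ℝ} (ht : 0 < t) (hs : Summable fun n => a n * t ^ n)
    {n : ℕ} (hn : 0 < a n) : 0 < psi a t :=
  (mul_pos hn (pow_pos ht n)).trans_le (coeff_mul_pow_le_psi ha ht.le hs n)

lemma monotoneOn_psi (ha : ∀ n, 0 ≤ a n)
    (hconv : SummableOnIco a R) :
    MonotoneOn (psi a) (Ico 0 R) := fun s hs t ht hst =>
  (hconv s hs.1 hs.2).tsum_le_tsum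
    (fun n => mul_le_mul_of_nonneg_left (pow_le_pow_left₀ hs.1 hst n) (ha n)) (hconv t ht.1 ht.2)

end PowerSeries

noncomputable def tangentIntercept (b : ℕ → ℝ) (y : ℝ) : ℝ :=
  psi b y - y * psi (derivCoeff b) y

noncomputable def fixedPointGap (b : ℕ → ℝ) (t x : ℝ) : ℝ := psi b (t * x) - x * psi b t

section Extinction

variable {b : ℕ → ℝ} {R t : ℝ}

lemma tangentIntercept_eq_zero_of_mean_eq_one
    (hconv : SummableOnIco b R) {τ : ℝ} (hτ : τ ∈ Ioo 0 R)
    (hmean : mean b τ = 1) : tangentIntercept b τ = 0 := by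
  have hψ : psi b τ ≠ 0 := fun h => by simp [mean, h] at hmean
  rw [mean, (hasDerivAt_psi hconv (by rw [abs_of_pos hτ.1]; exact hτ.2)).deriv,
    div_eq_one_iff_eq hψ] at hmean
  rw [tangentIntercept, hmean, sub_self]

lemma exists_two_le_coeff_pos_of_tangentIntercept_eq_zero (hnn : ∀ n, 0 ≤ b n) (hb0 : 0 < b 0)
    {τ : ℝ} (hτ : tangentIntercept b τ = 0) : ∃ n, 2 ≤ n ∧ 0 < b n := by
  by_contra! h
  have hb : ∀ n, 2 ≤ n → b n = 0 := fun n hn => (h n hn).antisymm (hnn n)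
  have hψ : psi b τ = b 0 + b 1 * τ := by
    rw [psi, tsum_eq_sum (s := Finset.range 2) fun n hn => by
      rw [hb n (by simp at hn; omega), zero_mul]]
    simp [Finset.sum_range_succ]
  have hψ' : psi (derivCoeff b) τ = b 1 := by
    rw [psi, tsum_eq_single 0 fun n hn => by
      rw [derivCoeff, hb (n + 1) (by omega), mul_zero, zero_mul]]
    simp [derivCoeff]
  rw [tangentIntercept, hψ, hψ'] at hτ
  linarith

lemma hasDerivAt_tangentIntercept
    (hconv : SummableOnIco b R) {y : ℝ} (hy : |y| < R) :
    HasDerivAt (tangentIntercept b) (-(y * psi (derivCoeff (derivCoeff b)) y)) y := by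
  have := (hasDerivAt_psi hconv hy).fun_sub
    ((hasDerivAt_id' y).fun_mul (hasDerivAt_psi (summable_derivCoeff hconv) hy))
  exact this.congr_deriv (by ring)

lemma psi_derivCoeff_derivCoeff_pos (hnn : ∀ n, 0 ≤ b n)
    (hconv : SummableOnIco b R)
    (hnonlin : ∃ n, 2 ≤ n ∧ 0 < b n) {y : ℝ} (hy : y ∈ Ioo 0 R) :
    0 < psi (derivCoeff (derivCoeff b)) y := by
  obtain ⟨n, hn, hbn⟩ := hnonlin
  obtain ⟨m, rfl⟩ := Nat.exists_eq_add_of_le' hn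
  refine psi_pos (derivCoeff_nonneg (derivCoeff_nonneg hnn)) hy.1
    (summable_derivCoeff (summable_derivCoeff hconv) y hy.1.le hy.2) (n := m) ?_
  simp only [derivCoeff]
  positivity

lemma strictAntiOn_tangentIntercept (hnn : ∀ n, 0 ≤ b n)
    (hconv : SummableOnIco b R)
    (hnonlin : ∃ n, 2 ≤ n ∧ 0 < b n) : StrictAntiOn (tangentIntercept b) (Ico 0 R) := by
  have hderiv : ∀ y ∈ Ico 0 R, HasDerivAt (tangentIntercept b)
      (-(y * psi (derivCoeff (derivCoeff b)) y)) y := fun y hy =>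
    hasDerivAt_tangentIntercept hconv (by rw [abs_of_nonneg hy.1]; exact hy.2)
  refine strictAntiOn_of_hasDerivWithinAt_neg (convex_Ico 0 R)
    (fun y hy => (hderiv y hy).continuousAt.continuousWithinAt)
    (fun y hy => (hderiv y (interior_subset hy)).hasDerivWithinAt) fun y hy => ?_
  rw [interior_Ico] at hy
  exact neg_neg_of_pos (mul_pos hy.1 (psi_derivCoeff_derivCoeff_pos hnn hconv hnonlin hy))

lemma fixedPointGap_zero (b : ℕ → ℝ) (t : ℝ) : fixedPointGap b t 0 = b 0 := by
  simp [fixedPointGap, psi_zero]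

lemma fixedPointGap_one (b : ℕ → ℝ) (t : ℝ) : fixedPointGap b t 1 = 0 := by
  simp [fixedPointGap]

lemma abs_mul_lt_of_mem_Icc {x : ℝ} (ht : t ∈ Ico 0 R) (hx : x ∈ Icc 0 1) : |t * x| < R := by
  rw [abs_of_nonneg (mul_nonneg ht.1 hx.1)]
  exact (mul_le_of_le_one_right ht.1 hx.2).trans_lt ht.2

lemma hasDerivAt_fixedPointGap
    (hconv : SummableOnIco b R) {x : ℝ}
    (ht : t ∈ Ico 0 R) (hx : x ∈ Icc 0 1) :
    HasDerivAt (fixedPointGap b t) (t * psi (derivCoeff b) (t * x) - psi b t) x := by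
  have := ((hasDerivAt_psi hconv (abs_mul_lt_of_mem_Icc ht hx)).comp x
    ((hasDerivAt_id' x).const_mul t)).fun_sub ((hasDerivAt_id' x).mul_const (psi b t))
  exact this.congr_deriv (by ring)

lemma hasDerivAt_deriv_fixedPointGap
    (hconv : SummableOnIco b R) {x : ℝ}
    (ht : t ∈ Ico 0 R) (hx : x ∈ Icc 0 1) :
    HasDerivAt (fun y => t * psi (derivCoeff b) (t * y) - psi b t)
      (t ^ 2 * psi (derivCoeff (derivCoeff b)) (t * x)) x := by
  have := (((hasDerivAt_psi (summable_derivCoeff hconv) (abs_mul_lt_of_mem_Icc ht hx)).comp x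
    ((hasDerivAt_id' x).const_mul t)).const_mul t).sub_const (psi b t)
  exact this.congr_deriv (by ring)

lemma continuousOn_fixedPointGap
    (hconv : SummableOnIco b R) (ht : t ∈ Ico 0 R) :
    ContinuousOn (fixedPointGap b t) (Icc 0 1) := fun _ hx =>
  (hasDerivAt_fixedPointGap hconv ht hx).continuousAt.continuousWithinAt

lemma extq_nonneg (b : ℕ → ℝ) (t : ℝ) : 0 ≤ extq b t :=
  Real.sInf_nonneg fun _ hx => hx.1

lemma extq_le {z : ℝ} (hz : 0 ≤ z) (h : fixedPointGap b t z = 0) : extq b t ≤ z :=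
  csInf_le ⟨0, fun _ hx => hx.1⟩ ⟨hz, sub_eq_zero.1 h⟩

lemma extq_le_one (b : ℕ → ℝ) (t : ℝ) : extq b t ≤ 1 :=
  extq_le zero_le_one (fixedPointGap_one b t)

lemma fixedPointGap_extq
    (hconv : SummableOnIco b R) (ht : t ∈ Ico 0 R) :
    fixedPointGap b t (extq b t) = 0 := by
  set S := {x | 0 ≤ x ∧ psi b (t * x) = x * psi b t}
  -- Beyond `x = 1` the equation may hold for junk values of `psi` outside its disc of
  -- convergence, so only the part of `S` below `1` is known to be closed.
  have hcl : S ∩ Iic 1 = Icc 0 1 ∩ fixedPointGap b t ⁻¹' {0} := by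
    ext x
    simp only [S, mem_inter_iff, mem_ofPred_eq, mem_Iic, mem_Icc, mem_preimage,
      mem_singleton_iff, fixedPointGap, sub_eq_zero]
    tauto
  have hleast : IsLeast S (sInf S) := isLeast_csInf_of_isClosed_inter_Iic
    (⟨zero_le_one, by simp⟩ : (1 : ℝ) ∈ S) ⟨0, fun _ hx => hx.1⟩
    (hcl ▸ (continuousOn_fixedPointGap hconv ht).preimage_isClosed_of_isClosed
      isClosed_Icc isClosed_singleton)
  exact sub_eq_zero.2 hleast.1.2

lemma div_psi_le_extq (hnn : ∀ n, 0 ≤ b n)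
    (hconv : SummableOnIco b R) (ht : t ∈ Ico 0 R) :
    b 0 / psi b t ≤ extq b t := by
  have hq0 := extq_nonneg b t
  have htq : t * extq b t ∈ Ico 0 R :=
    ⟨mul_nonneg ht.1 hq0, (mul_le_of_le_one_right ht.1 (extq_le_one b t)).trans_lt ht.2⟩
  have hb0 : b 0 ≤ psi b (t * extq b t) := by
    simpa using coeff_mul_pow_le_psi hnn htq.1 (hconv _ htq.1 htq.2) 0
  have hψ : 0 ≤ psi b t := tsum_nonneg fun n => mul_nonneg (hnn n) (pow_nonneg ht.1 n)
  exact div_le_of_le_mul₀ hψ hq0 (hb0.trans (sub_eq_zero.1 (fixedPointGap_extq hconv ht)).le)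

lemma exists_neg_tangentIntercept_eq
    (hconv : SummableOnIco b R) (ht : t ∈ Ico 0 R)
    (hq : extq b t < 1) : ∃ ξ ∈ Ioo (extq b t) 1, -tangentIntercept b t =
      t ^ 2 * psi (derivCoeff (derivCoeff b)) (t * ξ) * (1 - extq b t) / 2 := by
  have hIcc : Icc (extq b t) 1 ⊆ Icc 0 1 := Icc_subset_Icc_left (extq_nonneg b t)
  obtain ⟨ξ, hξ, h⟩ := exists_hasDerivAt_eq_mul_sub_div_two hq
    (fun x hx => hasDerivAt_fixedPointGap hconv ht (hIcc hx))
    (fun x hx => hasDerivAt_deriv_fixedPointGap hconv ht (hIcc hx))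
    (fixedPointGap_extq hconv ht) (fixedPointGap_one b t)
  refine ⟨ξ, hξ, ?_⟩
  rw [tangentIntercept, ← h, mul_one]
  ring

end Extinction

section PhaseTransition

variable {b : ℕ → ℝ} {R t τ : ℝ}

lemma tangentIntercept_neg_of_extq_lt_one (hnn : ∀ n, 0 ≤ b n)
    (hconv : SummableOnIco b R)
    (hnonlin : ∃ n, 2 ≤ n ∧ 0 < b n) (ht : t ∈ Ioo 0 R) (hq : extq b t < 1) :
    tangentIntercept b t < 0 := by
  obtain ⟨ξ, hξ, h⟩ := exists_neg_tangentIntercept_eq hconv ⟨ht.1.le, ht.2⟩ hq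
  have hξ0 : 0 < ξ := (extq_nonneg b t).trans_lt hξ.1
  have hψ'' := psi_derivCoeff_derivCoeff_pos hnn hconv hnonlin
    ⟨mul_pos ht.1 hξ0, (mul_lt_of_lt_one_right ht.1 hξ.2).trans ht.2⟩
  have : 0 < t ^ 2 * psi (derivCoeff (derivCoeff b)) (t * ξ) * (1 - extq b t) / 2 :=
    div_pos (mul_pos (mul_pos (pow_pos ht.1 2) hψ'') (sub_pos.2 hq)) two_pos
  linarith

lemma extq_lt_one_of_tangentIntercept_neg (hb0 : 0 < b 0)
    (hconv : SummableOnIco b R) (ht : t ∈ Ico 0 R)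
    (hG : tangentIntercept b t < 0) : extq b t < 1 := by
  -- `fixedPointGap b t` vanishes at `1` with slope `-tangentIntercept b t > 0`, so it is negative
  -- somewhere in `(0, 1)`, while it is positive at `0`.
  have hd := hasDerivAt_fixedPointGap hconv ht (right_mem_Icc.2 zero_le_one)
  rw [mul_one] at hd
  obtain ⟨x, hx, hfx⟩ := hd.exists_mem_Ioo_neg (by rw [tangentIntercept] at hG; linarith)
    (fixedPointGap_one b t) zero_lt_one
  obtain ⟨z, hz, hfz⟩ := intermediate_value_Icc' hx.1.le
    ((continuousOn_fixedPointGap hconv ht).mono (Icc_subset_Icc_right hx.2.le))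
    ⟨hfx.le, (fixedPointGap_zero b t).symm ▸ hb0.le⟩
  exact (extq_le hz.1 hfz).trans_lt (hz.2.trans_lt hx.2)

variable (hnn : ∀ n, 0 ≤ b n) (hb0 : 0 < b 0)
  (hconv : SummableOnIco b R)
  (hnonlin : ∃ n, 2 ≤ n ∧ 0 < b n) (hτ : τ ∈ Ioo 0 R) (hG : tangentIntercept b τ = 0)
include hnn hconv hnonlin hτ hG

lemma extq_eq_one_of_le (ht : t ∈ Ioc 0 τ) : extq b t = 1 := by
  by_contra hne
  have hneg := tangentIntercept_neg_of_extq_lt_one hnn hconv hnonlin ⟨ht.1, ht.2.trans_lt hτ.2⟩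
    ((extq_le_one b t).lt_of_ne hne)
  have := (strictAntiOn_tangentIntercept hnn hconv hnonlin).antitoneOn
    ⟨ht.1.le, ht.2.trans_lt hτ.2⟩ ⟨hτ.1.le, hτ.2⟩ ht.2
  linarith

lemma tendsto_extq_sub_one_div_nhdsLT :
    Tendsto (fun t => (extq b t - 1) / (t - τ)) (𝓝[<] τ) (𝓝 0) := by
  refine tendsto_const_nhds.congr' ?_
  filter_upwards [Ioo_mem_nhdsLT hτ.1] with t ht
  rw [extq_eq_one_of_le hnn hconv hnonlin hτ hG ⟨ht.1, ht.2.le⟩, sub_self, zero_div]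

include hb0

lemma exists_extq_sub_one_eq (ht : t ∈ Ioo τ R) : ∃ ξ ∈ Ioo (extq b t) 1,
    extq b t - 1 =
      2 * tangentIntercept b t / (t ^ 2 * psi (derivCoeff (derivCoeff b)) (t * ξ)) := by
  have ht0 : 0 < t := hτ.1.trans ht.1
  have hq := extq_lt_one_of_tangentIntercept_neg hb0 hconv ⟨ht0.le, ht.2⟩ (hG ▸
    strictAntiOn_tangentIntercept hnn hconv hnonlin ⟨hτ.1.le, hτ.2⟩ ⟨ht0.le, ht.2⟩ ht.1)
  obtain ⟨ξ, hξ, h⟩ := exists_neg_tangentIntercept_eq hconv ⟨ht0.le, ht.2⟩ hq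
  have hψ'' := psi_derivCoeff_derivCoeff_pos hnn hconv hnonlin
    ⟨mul_pos ht0 ((extq_nonneg b t).trans_lt hξ.1),
      (mul_lt_of_lt_one_right ht0 hξ.2).trans ht.2⟩
  refine ⟨ξ, hξ, ?_⟩
  field_simp
  linarith

lemma one_sub_le_extq {r : ℝ} (hτr : τ < r) (hrR : r < R) (ht : t ∈ Ioo τ r) :
    1 - 2 / (τ ^ 2 * psi (derivCoeff (derivCoeff b)) (τ * (b 0 / psi b r))) *
      -tangentIntercept b t ≤ extq b t := by
  have hr0 : 0 < r := hτ.1.trans hτr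
  have ht0 : 0 < t := hτ.1.trans ht.1
  have htR : t < R := ht.2.trans hrR
  set c := b 0 / psi b r
  have hc : 0 < c := div_pos hb0 (psi_pos hnn hr0 (hconv r hr0.le hrR) hb0)
  have hτc : τ * c < R :=
    (mul_le_of_le_one_right hτ.1.le ((div_psi_le_extq hnn hconv ⟨hr0.le, hrR⟩).trans
      (extq_le_one b r))).trans_lt hτ.2
  have hψ''c := psi_derivCoeff_derivCoeff_pos hnn hconv hnonlin ⟨mul_pos hτ.1 hc, hτc⟩
  obtain ⟨ξ, hξ, h⟩ := exists_extq_sub_one_eq hnn hb0 hconv hnonlin hτ hG ⟨ht.1, htR⟩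
  have hGt : 0 ≤ -tangentIntercept b t := neg_nonneg.2 (hG ▸ (strictAntiOn_tangentIntercept
    hnn hconv hnonlin ⟨hτ.1.le, hτ.2⟩ ⟨ht0.le, htR⟩ ht.1).le)
  -- `extq b t ≥ b 0 / ψ(t) ≥ c` keeps `ψ''(tξ) ≥ ψ''(τc) > 0` uniformly in `t`.
  have hcξ : c ≤ ξ := calc
    c ≤ b 0 / psi b t := div_le_div_of_nonneg_left hb0.le
      (psi_pos hnn ht0 (hconv t ht0.le htR) hb0)
      (monotoneOn_psi hnn hconv ⟨ht0.le, htR⟩ ⟨hr0.le, hrR⟩ ht.2.le)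
    _ ≤ extq b t := div_psi_le_extq hnn hconv ⟨ht0.le, htR⟩
    _ ≤ ξ := hξ.1.le
  have hden : τ ^ 2 * psi (derivCoeff (derivCoeff b)) (τ * c) ≤
      t ^ 2 * psi (derivCoeff (derivCoeff b)) (t * ξ) :=
    mul_le_mul (pow_le_pow_left₀ hτ.1.le ht.1.le 2)
      (monotoneOn_psi (derivCoeff_nonneg (derivCoeff_nonneg hnn))
        (summable_derivCoeff (summable_derivCoeff hconv)) ⟨(mul_pos hτ.1 hc).le, hτc⟩
        ⟨mul_nonneg ht0.le (hc.le.trans hcξ),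
          (mul_le_of_le_one_right ht0.le hξ.2.le).trans_lt htR⟩
        (mul_le_mul ht.1.le hcξ hc.le ht0.le))
      hψ''c.le (sq_nonneg t)
  calc 1 - 2 / (τ ^ 2 * psi (derivCoeff (derivCoeff b)) (τ * c)) * -tangentIntercept b t
      ≤ 1 - 2 * -tangentIntercept b t / (t ^ 2 * psi (derivCoeff (derivCoeff b)) (t * ξ)) := by
        rw [div_mul_eq_mul_div]
        gcongr
        exact mul_pos (pow_pos hτ.1 2) hψ''c
    _ = extq b t := by rw [mul_neg, neg_div, sub_neg_eq_add, ← h]; ring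

lemma tendsto_extq_nhdsGT : Tendsto (extq b) (𝓝[>] τ) (𝓝 1) := by
  obtain ⟨r, hτr, hrR⟩ := exists_between hτ.2
  have hGlim : Tendsto (tangentIntercept b) (𝓝[>] τ) (𝓝 0) := by
    have := (hasDerivAt_tangentIntercept hconv (by rw [abs_of_pos hτ.1]; exact hτ.2)).continuousAt
    rw [ContinuousAt, hG] at this
    exact this.mono_left nhdsWithin_le_nhds
  have hlower : Tendsto (fun t => 1 - 2 / (τ ^ 2 * psi (derivCoeff (derivCoeff b))
      (τ * (b 0 / psi b r))) * -tangentIntercept b t) (𝓝[>] τ) (𝓝 1) := by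
    simpa using (hGlim.neg.const_mul _).const_sub 1
  exact tendsto_of_tendsto_of_tendsto_of_le_of_le' hlower tendsto_const_nhds
    (eventually_of_mem (Ioo_mem_nhdsGT hτr) fun _ =>
      one_sub_le_extq hnn hb0 hconv hnonlin hτ hG hτr hrR)
    (Eventually.of_forall (extq_le_one b))

lemma tendsto_extq_sub_one_div_nhdsGT :
    Tendsto (fun t => (extq b t - 1) / (t - τ)) (𝓝[>] τ) (𝓝 (-2 / τ)) := by
  have hτR : |τ| < R := by rw [abs_of_pos hτ.1]; exact hτ.2
  choose! ξ hξ hξeq using fun t (ht : t ∈ Ioo τ R) =>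
    exists_extq_sub_one_eq hnn hb0 hconv hnonlin hτ hG ht
  have hIoo : Ioo τ R ∈ 𝓝[>] τ := Ioo_mem_nhdsGT hτ.2
  have hid : Tendsto (fun t : ℝ => t) (𝓝[>] τ) (𝓝 τ) :=
    tendsto_id.mono_left nhdsWithin_le_nhds
  have htξ : Tendsto (fun t => t * ξ t) (𝓝[>] τ) (𝓝 τ) := by
    refine tendsto_of_tendsto_of_tendsto_of_le_of_le' (by
      simpa using hid.mul (tendsto_extq_nhdsGT hnn hb0 hconv hnonlin hτ hG)) hid ?_ ?_
    · filter_upwards [hIoo] with t ht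
      exact mul_le_mul_of_nonneg_left (hξ t ht).1.le (hτ.1.trans ht.1).le
    · filter_upwards [hIoo] with t ht
      exact mul_le_of_le_one_right (hτ.1.trans ht.1).le (hξ t ht).2.le
  have hslope : Tendsto (fun t => tangentIntercept b t / (t - τ)) (𝓝[>] τ)
      (𝓝 (-(τ * psi (derivCoeff (derivCoeff b)) τ))) := by
    refine ((hasDerivAt_iff_tendsto_slope.1 (hasDerivAt_tangentIntercept hconv hτR)).mono_left
      (nhdsGT_le_nhdsNE τ)).congr fun t => ?_
    rw [slope_def_field, hG, sub_zero]
  have hψ'' := psi_derivCoeff_derivCoeff_pos hnn hconv hnonlin hτ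
  have hden : Tendsto (fun t => t ^ 2 * psi (derivCoeff (derivCoeff b)) (t * ξ t)) (𝓝[>] τ)
      (𝓝 (τ ^ 2 * psi (derivCoeff (derivCoeff b)) τ)) :=
    (hid.pow 2).mul ((hasDerivAt_psi (summable_derivCoeff
      (summable_derivCoeff hconv)) hτR).continuousAt.tendsto.comp htξ)
  have hlim := (hslope.const_mul 2).div hden (mul_pos (pow_pos hτ.1 2) hψ'').ne'
  rw [show 2 * -(τ * psi (derivCoeff (derivCoeff b)) τ) /
      (τ ^ 2 * psi (derivCoeff (derivCoeff b)) τ) = -2 / τ by field_simp] at hlim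
  refine hlim.congr' ?_
  filter_upwards [hIoo] with t ht
  simp only [Pi.div_apply, hξeq t ht]
  ring

end PhaseTransition

theorem stmt_19_general
    (b : ℕ → ℝ) (R : ℝ)
    (hnn : ∀ n, 0 ≤ b n) (hb0 : 0 < b 0)
    (hconv : ∀ t : ℝ, 0 ≤ t → t < R → Summable fun n => b n * t ^ n)
    (τ : ℝ) (hτ : τ ∈ Set.Ioo 0 R) (happex : mean b τ = 1) :
    Filter.Tendsto (fun t => (extq b t - 1) / (t - τ))
      (nhdsWithin τ (Set.Iio τ)) (nhds 0) ∧
    Filter.Tendsto (fun t => (extq b t - 1) / (t - τ))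
      (nhdsWithin τ (Set.Ioi τ)) (nhds (-2 / τ)) := by
  have hG := tangentIntercept_eq_zero_of_mean_eq_one hconv hτ happex
  have hnonlin := exists_two_le_coeff_pos_of_tangentIntercept_eq_zero hnn hb0 hG
  exact ⟨tendsto_extq_sub_one_div_nhdsLT hnn hconv hnonlin hτ hG,
    tendsto_extq_sub_one_div_nhdsGT hnn hb0 hconv hnonlin hτ hG⟩

theorem stmt_19
    (b : ℕ → ℝ) (R : ℝ) (hR : 0 < R)
    (hnn : ∀ n, 0 ≤ b n) (hb0 : 0 < b 0)
    (hnc : ∃ n, 1 ≤ n ∧ b n ≠ 0)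
    (hconv : ∀ t : ℝ, 0 ≤ t → t < R → Summable fun n => b n * t ^ n)
    (τ : ℝ) (hτ : τ ∈ Set.Ioo 0 R) (happex : mean b τ = 1) :
    Filter.Tendsto (fun t => (extq b t - 1) / (t - τ))
      (nhdsWithin τ (Set.Iio τ)) (nhds 0) ∧
    Filter.Tendsto (fun t => (extq b t - 1) / (t - τ))
      (nhdsWithin τ (Set.Ioi τ)) (nhds (-2 / τ)) :=
  stmt_19_general b R hnn hb0 hconv τ hτ happex
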